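/- arXiv:2508.19669 — 4 statements merged into one kernel-verified Lean document; each statement's English description precedes it below -/
import Mathlib

section
/- Let $A$ be a $d\times d$ SICUP matrix, i.e. a real matrix with integer entries that is symmetric, circulant, positive definite and has determinant $1$, with $d = 2r+1$ odd and first row $(c_1, c_2, \ldots, c_d)$. Then the sum of the entries of any row of $A$ equals $1$, i.e. the eigenvalue $\lambda_1 = c_1 + c_2 + \cdots + c_d$ of $A$ corresponding to the all-ones vector equals $1$. -/
open Matrix

/-- A SICUP matrix of odd size has all row sums equal to 1. -/
theorem stmt_1 (d : ℕ) [NeZero d] (hodd : Odd d)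
    (A : Matrix (Fin d) (Fin d) ℤ)
    (hsym : A.IsSymm)
    (hcirc : ∀ i j : Fin d, A i j = A (i + 1) (j + 1))
    (hdet : A.det = 1)
    (hpos : (A.map ((↑) : ℤ → ℝ)).PosDef) :
    ∀ i : Fin d, ∑ j, A i j = 1 := by
  -- all row sums are equal
  set f : Fin d → ℤ := fun i => ∑ j, A i j with hf
  have hstep : ∀ i : Fin d, f (i + 1) = f i := by
    intro i
    have : ∑ j, A (i + 1) (j + 1) = ∑ j, A (i + 1) j :=
      Fintype.sum_equiv (Equiv.addRight (1 : Fin d)) _ _ (fun j => rfl)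
    simp only [hf]
    rw [← this]
    exact (Finset.sum_congr rfl fun j _ => (hcirc i j).symm)
  open Fin.NatCast in
  have haux : ∀ n : ℕ, f ((n : Fin d)) = f 0 := by
    intro n
    induction n with
    | zero => simp
    | succ n ih => rw [Nat.cast_succ, hstep, ih]
  have hconst : ∀ i : Fin d, f i = f 0 := by
    intro i
    have := haux i.val
    rwa [Fin.cast_val_eq_self] at this
  set s : ℤ := f 0 with hs
  -- eigenvector fact : A *ᵥ 1 = s • 1
  have hmul : A *ᵥ (fun _ => 1) = fun _ => s := by
    funext i
    simp only [Matrix.mulVec, dotProduct, mul_one]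
    exact hconst i
  -- invertibility
  have hA : Invertible A := A.invertibleOfIsUnitDet (by rw [hdet]; exact isUnit_one)
  have hinv : (⅟A * A) = 1 := invOf_mul_self A
  have h1 : (⅟A) *ᵥ (A *ᵥ (fun _ => 1)) = (fun _ => (1 : ℤ)) := by
    rw [Matrix.mulVec_mulVec, hinv, Matrix.one_mulVec]
  rw [hmul] at h1
  have h2 : (fun _ : Fin d => s) = s • (fun _ : Fin d => (1 : ℤ)) := by
    funext i; simp
  rw [h2, Matrix.mulVec_smul] at h1
  have hdvd : s ∣ 1 := by
    have := congrFun h1 0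
    simp only [Pi.smul_apply, smul_eq_mul] at this
    exact ⟨_, this.symm⟩
  -- positivity
  have hpos1 : (0 : ℝ) < s := by
    have hx : (fun _ : Fin d => (1 : ℝ)) ≠ 0 := by
      intro h
      have := congrFun h (0 : Fin d)
      simp at this
    have := hpos.dotProduct_mulVec_pos (x := fun _ => 1) hx
    simp only [dotProduct, Matrix.mulVec, Matrix.map_apply, Pi.star_apply, star_one, one_mul, mul_one] at this
    have hsum : ∑ i : Fin d, ∑ j : Fin d, ((A i j : ℝ)) = (d : ℝ) * (s : ℝ) := by
      have : ∀ i : Fin d, ∑ j : Fin d, ((A i j : ℝ)) = (s : ℝ) := by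
        intro i
        rw [← Int.cast_sum]
        exact_mod_cast congrArg (Int.cast : ℤ → ℝ) (hconst i)
      rw [Finset.sum_congr rfl (fun i _ => this i)]
      simp [mul_comm]
    rw [hsum] at this
    have hd : (0 : ℝ) < d := by
      exact_mod_cast Nat.pos_of_ne_zero (NeZero.ne d)
    nlinarith
  have hspos : (0 : ℤ) < s := by exact_mod_cast hpos1
  have hs1 : s = 1 := Int.eq_one_of_dvd_one hspos.le hdvd
  intro i
  calc ∑ j, A i j = f i := rfl
    _ = f 0 := hconst i
    _ = 1 := hs1
end

section
/- Let $A(x,l,m)$ be the $5\times 5$ symmetric circulant integer matrix with first row $(x,l,m,m,l)$. If $A(x,l,m)$ is a SICUP matrix (i.e., positive definite with determinant 1), then $x + 2l + 2m = 1$ and $(2x - l - m)^2 - 5(l - m)^2 = 4$. -/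
/-- The 5×5 symmetric circulant integer matrix with first row `(x, l, m, m, l)`. -/
def A5 (x l m : ℤ) : Matrix (Fin 5) (Fin 5) ℤ :=
  Matrix.of fun i j => ![x, l, m, m, l] (j - i)

lemma A5_eq_explicit (x l m : ℤ) : A5 x l m =
    !![x,l,m,m,l; l,x,l,m,m; m,l,x,l,m; m,m,l,x,l; l,m,m,l,x] := by
  ext i j
  fin_cases i <;> fin_cases j <;> rfl

@[simp] lemma aux_cs24 : (Fin.castSucc 2 : Fin 4) = 2 := rfl
@[simp] lemma aux_cs25 : (Fin.castSucc 2 : Fin 5) = 2 := rfl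
@[simp] lemma aux_cs35 : (Fin.castSucc 3 : Fin 5) = 3 := rfl
@[simp] lemma aux_sc25 : (Fin.castSucc (Fin.succ (2 : Fin 3)) : Fin 5) = 3 := rfl

set_option maxHeartbeats 4000000 in
lemma A5_det (x l m : ℤ) : (A5 x l m).det =
    (x + 2*l + 2*m) * (x^2 - x*l - x*m - l^2 + 3*l*m - m^2)^2 := by
  rw [A5_eq_explicit]
  simp [Matrix.det_succ_row_zero, Fin.sum_univ_succ, Fin.succAbove,
    Matrix.det_fin_three]
  ring

lemma A5_lam1_pos (x l m : ℤ)
    (hpos : ((A5 x l m).map ((↑) : ℤ → ℝ)).PosDef) :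
    (0:ℤ) < x + 2*l + 2*m := by
  have hv1 : (![1,1,1,1,1] : Fin 5 → ℝ) ≠ 0 := by
    intro h; have := congrFun h 0; norm_num at this
  have h1 := hpos.dotProduct_mulVec_pos hv1
  rw [A5_eq_explicit] at h1
  simp [Matrix.mulVec, dotProduct, Fin.sum_univ_five, Matrix.map_apply,
    Matrix.vecHead, Matrix.vecTail] at h1
  have : (0:ℝ) < ((x:ℝ) + 2*l + 2*m) := by linarith
  exact_mod_cast this

lemma A5_q_pos (x l m : ℤ)
    (hpos : ((A5 x l m).map ((↑) : ℤ → ℝ)).PosDef) :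
    (0:ℤ) < x^2 - x*l - x*m - l^2 + 3*l*m - m^2 := by
  set t := Real.sqrt 5 with htdef
  have ht : t^2 = 5 := Real.sq_sqrt (by norm_num)
  have hv2 : (![2, (t-1)/2, -(t+1)/2, -(t+1)/2, (t-1)/2] : Fin 5 → ℝ) ≠ 0 := by
    intro h; have := congrFun h 0; norm_num at this
  have hv3 : (![2, -(t+1)/2, (t-1)/2, (t-1)/2, -(t+1)/2] : Fin 5 → ℝ) ≠ 0 := by
    intro h; have := congrFun h 0; norm_num at this
  have h2 := hpos.dotProduct_mulVec_pos hv2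
  have h3 := hpos.dotProduct_mulVec_pos hv3
  rw [A5_eq_explicit] at h2 h3
  simp [Matrix.mulVec, dotProduct, Fin.sum_univ_five, Matrix.map_apply,
    Matrix.vecHead, Matrix.vecTail] at h2 h3
  have e2 : (0:ℝ) < (x:ℝ) + l*(t-1)/2 - m*(t+1)/2 := by nlinarith [h2, ht]
  have e3 : (0:ℝ) < (x:ℝ) - l*(t+1)/2 + m*(t-1)/2 := by nlinarith [h3, ht]
  have hprod : ((x:ℝ) + l*(t-1)/2 - m*(t+1)/2) * ((x:ℝ) - l*(t+1)/2 + m*(t-1)/2)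
      = (x:ℝ)^2 - x*l - x*m - l^2 + 3*l*m - m^2 := by
    linear_combination ((2*(l:ℝ)*m - l^2 - m^2)/4) * ht
  have hq : (0:ℝ) < ((x:ℝ)^2 - x*l - x*m - l^2 + 3*l*m - m^2) := hprod ▸ mul_pos e2 e3
  exact_mod_cast hq

/-- If `A(x,l,m)` is a SICUP matrix then `x+2l+2m = 1` and
`(2x-l-m)² - 5(l-m)² = 4`. -/
theorem stmt_7 (x l m : ℤ)
    (hdet : (A5 x l m).det = 1)
    (hpos : ((A5 x l m).map ((↑) : ℤ → ℝ)).PosDef) :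
    x + 2 * l + 2 * m = 1 ∧ (2 * x - l - m) ^ 2 - 5 * (l - m) ^ 2 = 4 := by
  rw [A5_det] at hdet
  have hs := A5_lam1_pos x l m hpos
  have hq := A5_q_pos x l m hpos
  set s := x + 2*l + 2*m with hsdef
  set q := x^2 - x*l - x*m - l^2 + 3*l*m - m^2 with hqdef
  have hs1 : 1 ≤ s := hs
  have hq1 : 1 ≤ q := hq
  have hqeq : q = 1 := by nlinarith
  have hseq : s = 1 := by nlinarith
  constructor
  · linarith [hseq]
  · linear_combination 4 * hqeq
end

section
/- There exist infinitely many $5\times 5$ SICUP matrices. Equivalently, there are infinitely many integer triples $(x,l,m)$ such that the symmetric circulant matrix with first row $(x,l,m,m,l)$ is positive definite with determinant 1. -/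
set_option maxRecDepth 8000


/-- `A(x,l,m)` is a SICUP matrix: unimodular and positive definite. -/
def IsSICUP5 (x l m : ℤ) : Prop :=
  (A5 x l m).det = 1 ∧ ((A5 x l m).map ((↑) : ℤ → ℝ)).PosDef

namespace SICUPAux

open Matrix

/-- the fixed multiplier (a unit of the group ring ℤ[C₅]) -/
def cw : Fin 5 → ℤ := ![-1, 0, 1, 1, 0]

/-- cyclic convolution -/
def conv (a b : Fin 5 → ℤ) : Fin 5 → ℤ := fun k => ∑ j : Fin 5, a j * b (k - j)

/-- circulant matrix -/
def circ (v : Fin 5 → ℤ) : Matrix (Fin 5) (Fin 5) ℤ := Matrix.of fun i j => v (j - i)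

/-- the sequence of generating vectors -/
def u : ℕ → Fin 5 → ℤ
  | 0 => ![1, 1, 0, -1, 0]
  | n + 1 => conv (u n) cw

lemma u_succ (n : ℕ) : u (n + 1) = conv (u n) cw := rfl

def X (v : Fin 5 → ℤ) : ℤ := ∑ i : Fin 5, v i * v i
def L (v : Fin 5 → ℤ) : ℤ := ∑ i : Fin 5, v i * v (i + 1)
def M (v : Fin 5 → ℤ) : ℤ := ∑ i : Fin 5, v i * v (i + 2)

lemma fneg1 : (-1 : Fin 5) = 4 := by decide
lemma fneg2 : (-2 : Fin 5) = 3 := by decide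
lemma fneg3 : (-3 : Fin 5) = 2 := by decide
lemma fneg4 : (-4 : Fin 5) = 1 := by decide
lemma fneg5 : (-5 : Fin 5) = 0 := by decide
lemma fneg6 : (-6 : Fin 5) = 4 := by decide
lemma fneg7 : (-7 : Fin 5) = 3 := by decide
lemma fneg8 : (-8 : Fin 5) = 2 := by decide
lemma ff5 : (5 : Fin 5) = 0 := by decide
lemma ff6 : (6 : Fin 5) = 1 := by decide

lemma circ_conv (a b : Fin 5 → ℤ) : circ (conv a b) = circ a * circ b := by
  ext i j
  fin_cases i <;> fin_cases j <;>
    simp [circ, conv, Matrix.mul_apply, Fin.sum_univ_five,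
      fneg1, fneg2, fneg3, fneg4, fneg5, fneg6, fneg7, fneg8] <;> ring

lemma gram (v : Fin 5 → ℤ) : (circ v)ᵀ * circ v = A5 (X v) (L v) (M v) := by
  ext i j
  fin_cases i <;> fin_cases j <;>
    simp [circ, A5, X, L, M, Matrix.mul_apply, Matrix.transpose_apply, Fin.sum_univ_five,
      fneg1, fneg2, fneg3, fneg4, fneg5, fneg6, fneg7, fneg8] <;> ring

lemma circ_cw_explicit : circ cw =
    !![-1, 0, 1, 1, 0; 0, -1, 0, 1, 1; 1, 0, -1, 0, 1; 1, 1, 0, -1, 0; 0, 1, 1, 0, -1] := by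
  ext i j
  fin_cases i <;> fin_cases j <;> rfl

lemma circ_u0_explicit : circ (u 0) =
    !![1, 1, 0, -1, 0; 0, 1, 1, 0, -1; -1, 0, 1, 1, 0; 0, -1, 0, 1, 1; 1, 0, -1, 0, 1] := by
  ext i j
  fin_cases i <;> fin_cases j <;> rfl

lemma det_circ_cw : (circ cw).det = 1 := by
  rw [circ_cw_explicit]
  simp [Matrix.det_succ_row_zero, Fin.sum_univ_succ]
  decide

lemma det_circ_u0 : (circ (u 0)).det = 1 := by
  rw [circ_u0_explicit]
  simp [Matrix.det_succ_row_zero, Fin.sum_univ_succ]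
  decide

lemma det_circ_u (n : ℕ) : (circ (u n)).det = 1 := by
  induction n with
  | zero => exact det_circ_u0
  | succ n ih =>
    rw [u_succ, circ_conv, Matrix.det_mul, ih, det_circ_cw]
    norm_num

lemma X_conv (v : Fin 5 → ℤ) : X (conv v cw) = 3 * X v + 2 * L v - 4 * M v := by
  simp [X, L, M, conv, cw, Fin.sum_univ_five,
    fneg1, fneg2, fneg3, fneg4, fneg5, fneg6, fneg7, fneg8]
  ring

lemma L_conv (v : Fin 5 → ℤ) : L (conv v cw) = X v + L v - M v := by
  simp [X, L, M, conv, cw, Fin.sum_univ_five,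
    fneg1, fneg2, fneg3, fneg4, fneg5, fneg6, fneg7, fneg8]
  ring

lemma M_conv (v : Fin 5 → ℤ) : M (conv v cw) = -2 * X v - L v + 4 * M v := by
  simp [X, L, M, conv, cw, Fin.sum_univ_five,
    fneg1, fneg2, fneg3, fneg4, fneg5, fneg6, fneg7, fneg8]
  ring

/-- invariant: the Pell parameters stay large -/
lemma invariant (n : ℕ) :
    7 ≤ 2 * X (u n) - L (u n) - M (u n) ∧ 3 ≤ L (u n) - M (u n) := by
  induction n with
  | zero =>
    constructor <;> (simp only [u, X, L, M, Fin.sum_univ_five]; decide)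
  | succ n ih =>
    obtain ⟨h1, h2⟩ := ih
    rw [u_succ, X_conv, L_conv, M_conv]
    constructor <;> linarith

lemma b_strict (n : ℕ) : L (u n) - M (u n) < L (u (n + 1)) - M (u (n + 1)) := by
  obtain ⟨h1, h2⟩ := invariant n
  rw [u_succ, L_conv, M_conv]
  linarith

lemma det_A5_u (n : ℕ) : (A5 (X (u n)) (L (u n)) (M (u n))).det = 1 := by
  rw [← gram, Matrix.det_mul, Matrix.det_transpose, det_circ_u]
  norm_num

lemma posdef_A5_u (n : ℕ) :
    ((A5 (X (u n)) (L (u n)) (M (u n))).map ((↑) : ℤ → ℝ)).PosDef := by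
  have hg : (A5 (X (u n)) (L (u n)) (M (u n))).map ((↑) : ℤ → ℝ)
      = ((circ (u n)).map ((↑) : ℤ → ℝ))ᵀ * ((circ (u n)).map ((↑) : ℤ → ℝ)) := by
    rw [← gram]
    rw [show ((circ (u n))ᵀ * circ (u n)).map ((↑) : ℤ → ℝ)
        = ((circ (u n))ᵀ.map ((↑) : ℤ → ℝ)) * ((circ (u n)).map ((↑) : ℤ → ℝ)) from
      Matrix.map_mul (f := Int.castRingHom ℝ)]
    rw [Matrix.transpose_map]
  set B : Matrix (Fin 5) (Fin 5) ℝ := (circ (u n)).map ((↑) : ℤ → ℝ) with hB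
  have hdetB : B.det = 1 := by
    rw [hB, show (circ (u n)).map ((↑) : ℤ → ℝ)
        = (Int.castRingHom ℝ).mapMatrix (circ (u n)) from rfl,
      ← RingHom.map_det, det_circ_u]
    simp
  have hBunit : IsUnit B := by
    rw [Matrix.isUnit_iff_isUnit_det, hdetB]
    exact isUnit_one
  have hBinj : Function.Injective B.mulVec :=
    Matrix.mulVec_injective_iff_isUnit.2 hBunit
  rw [hg, Matrix.posDef_iff_dotProduct_mulVec]
  constructor
  · have := Matrix.isHermitian_conjTranspose_mul_self B
    rwa [Matrix.conjTranspose_eq_transpose_of_trivial] at this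
  · intro x hx
    have hBx : B *ᵥ x ≠ 0 := by
      intro h
      apply hx
      apply hBinj
      rw [h, Matrix.mulVec_zero]
    have hdp : star x ⬝ᵥ (Bᵀ * B) *ᵥ x = (B *ᵥ x) ⬝ᵥ (B *ᵥ x) := by
      rw [star_trivial, ← Matrix.mulVec_mulVec, Matrix.dotProduct_mulVec,
        Matrix.vecMul_transpose]
    rw [hdp]
    have h0 : (0 : ℝ) ≤ (B *ᵥ x) ⬝ᵥ (B *ᵥ x) :=
      Finset.sum_nonneg fun i _ => mul_self_nonneg _
    rcases h0.lt_or_eq with h | h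
    · exact h
    · exact absurd (dotProduct_self_eq_zero.1 h.symm) hBx

end SICUPAux

open SICUPAux in
/-- There exist infinitely many 5×5 SICUP matrices. -/
theorem stmt_11 :
    {p : ℤ × ℤ × ℤ | IsSICUP5 p.1 p.2.1 p.2.2}.Infinite := by
  apply Set.infinite_of_injective_forall_mem
    (f := fun n : ℕ => ((X (u n), L (u n), M (u n)) : ℤ × ℤ × ℤ))
  · have hmono : StrictMono fun n => L (u n) - M (u n) :=
      strictMono_nat_of_lt_succ b_strict
    intro a b hab
    apply hmono.injective
    simp only [Prod.mk.injEq] at hab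
    simp [hab.1, hab.2.1, hab.2.2]
  · intro n
    simp only [Set.mem_setOf_eq]
    exact ⟨det_A5_u n, posdef_A5_u n⟩
end

section
/- Let $A$ be a $d\times d$ SICUP matrix with $d$ odd. Then the sum of each row of $A$ equals exactly $1$. -/
open scoped Matrix
open Fin.NatCast

/-- A SICUP matrix of odd size has every row sum equal to exactly 1. -/
theorem stmt_15 (d : ℕ) [NeZero d] (hodd : Odd d)
    (A : Matrix (Fin d) (Fin d) ℤ)
    (hsym : A.IsSymm)
    (hcirc : ∀ i j : Fin d, A i j = A (i + 1) (j + 1))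
    (hdet : A.det = 1)
    (hpos : (A.map ((↑) : ℤ → ℝ)).PosDef) :
    ∀ i : Fin d, ∑ j, A i j = 1 := by
  set s : ℤ := ∑ j, A 0 j with hs
  -- row sums constant
  have hstep : ∀ i : Fin d, ∑ j, A i j = ∑ j, A (i+1) j := by
    intro i
    rw [show (∑ j, A i j) = ∑ j, A (i+1) (j+1) from Finset.sum_congr rfl (fun j _ => hcirc i j)]
    exact Fintype.sum_equiv (Equiv.addRight 1) _ _ (fun j => rfl)
  have hconst : ∀ i : Fin d, ∑ j, A i j = s := by
    have key : ∀ n : ℕ, ∑ j, A ((n : Fin d)) j = s := by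
      intro n
      induction n with
      | zero => simp [hs]
      | succ n ih =>
        have : ((n+1 : ℕ) : Fin d) = (n : Fin d) + 1 := by push_cast; ring
        rw [this, ← hstep]; exact ih
    intro i
    have := key i.val
    rwa [Fin.cast_val_eq_self] at this
  -- eigenvector
  have hones : A *ᵥ (fun _ => 1) = fun _ => s := by
    funext i
    simp [Matrix.mulVec, dotProduct, hconst i]
  -- det (s • 1 - A) = 0
  have hsing : (s • (1 : Matrix (Fin d) (Fin d) ℤ) - A).det = 0 := by
    rw [← Matrix.exists_mulVec_eq_zero_iff]
    refine ⟨fun _ => 1, ?_, ?_⟩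
    · intro h
      have := congrFun h 0
      simp at this
    · rw [Matrix.sub_mulVec, Matrix.smul_mulVec, Matrix.one_mulVec, hones]
      funext i; simp
  -- s is root of charpoly
  have heval : A.charpoly.eval s = 0 := by
    have h1 : A.charpoly.eval s = ((A.charmatrix).map (Polynomial.eval s)).det := by
      rw [Matrix.charpoly, ← Polynomial.coe_evalRingHom,
        ← RingHom.mapMatrix_apply (Polynomial.evalRingHom s)]
      exact RingHom.map_det _ _
    have h2 : (A.charmatrix).map (Polynomial.eval s)
        = s • (1 : Matrix (Fin d) (Fin d) ℤ) - A := by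
      ext i j
      by_cases h : i = j <;>
        simp [Matrix.charmatrix_apply, Matrix.one_apply, h, Matrix.map_apply,
          Matrix.sub_apply, Matrix.smul_apply, ← Matrix.diagonal_intCast (α := ℤ),
          Matrix.diagonal_apply]
    rw [h1, h2, hsing]
  -- s divides det
  have hdvd : s ∣ (1 : ℤ) := by
    obtain ⟨q, hq⟩ := (Polynomial.dvd_iff_isRoot.mpr heval : (Polynomial.X - Polynomial.C s) ∣ A.charpoly)
    have hc0 : A.charpoly.coeff 0 = (-s) * q.eval 0 := by
      rw [Polynomial.coeff_zero_eq_eval_zero, hq]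
      simp
    have := Matrix.det_eq_sign_charpoly_coeff A
    rw [hdet, hc0] at this
    exact ⟨(-1) ^ Fintype.card (Fin d) * (-(q.eval 0)), by linear_combination this⟩
  -- s > 0 from positive definiteness
  have hspos : 0 < s := by
    by_contra hneg
    push_neg at hneg
    have hv : (fun _ => (1:ℝ)) ≠ (0 : Fin d → ℝ) := by
      intro h
      have := congrFun h ⟨0, Nat.pos_of_ne_zero (NeZero.ne d)⟩
      simp at this
    have hp := hpos.dotProduct_mulVec_pos (x := fun _ => (1:ℝ)) hv
    have hcalc : (star (fun _ => (1:ℝ))) ⬝ᵥ ((A.map ((↑) : ℤ → ℝ)) *ᵥ (fun _ => 1)) = (d : ℝ) * s := by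
      simp only [star_trivial, dotProduct, Matrix.mulVec, Matrix.map_apply, one_mul]
      have : ∀ i : Fin d, ∑ j, ((A i j : ℝ)) * 1 = (s : ℝ) := by
        intro i
        simp only [mul_one]
        rw [← Int.cast_sum, hconst i]
      simp only [this]
      simp [Finset.sum_const]
    rw [hcalc] at hp
    have : (d : ℝ) * s ≤ 0 := by
      apply mul_nonpos_of_nonneg_of_nonpos
      · positivity
      · exact_mod_cast hneg
    linarith
  have hs1 : s = 1 := Int.eq_one_of_dvd_one (le_of_lt hspos) hdvd
  intro i
  rw [hconst i, hs1]
end
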